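/- If u and v are orthogonal twin-harmonics on an open set Ω ⊆ ℝ^N, then the pair (u² − v², 2uv) are orthogonal twin-harmonics on Ω. -/

import Mathlib

noncomputable section

/-- The partial derivative `∂f/∂xᵢ` of a function on `ℝ^N`. -/
noncomputable def pd {N : ℕ} (f : (Fin N → ℝ) → ℝ) (i : Fin N) (x : Fin N → ℝ) : ℝ :=
  fderiv ℝ f x (Pi.single i 1)

/-- The Laplacian `Δf = Σᵢ ∂²f/∂xᵢ²`. -/
noncomputable def lap {N : ℕ} (f : (Fin N → ℝ) → ℝ) (x : Fin N → ℝ) : ℝ :=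
  ∑ i, pd (pd f i) i x

/-- The ∞-Laplacian `Δ_∞ f = Σᵢⱼ (∂f/∂xᵢ)(∂f/∂xⱼ)(∂²f/∂xᵢ∂xⱼ)`. -/
noncomputable def infLap {N : ℕ} (f : (Fin N → ℝ) → ℝ) (x : Fin N → ℝ) : ℝ :=
  ∑ i, ∑ j, pd f i x * pd f j x * pd (pd f j) i x

/-- The 1-Laplacian `Δ₁f = |∇f|²Δf − Δ_∞f`. -/
noncomputable def lap1 {N : ℕ} (f : (Fin N → ℝ) → ℝ) (x : Fin N → ℝ) : ℝ :=
  (∑ i, pd f i x ^ 2) * lap f x - infLap f x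

/-- A C² function is perfectly harmonic on `Ω` if `Δf = 0` and `Δ_∞ f = 0` on `Ω`. -/
def PerfectlyHarmonic {N : ℕ} (f : (Fin N → ℝ) → ℝ) (Ω : Set (Fin N → ℝ)) : Prop :=
  ContDiffOn ℝ 2 f Ω ∧ ∀ x ∈ Ω, lap f x = 0 ∧ infLap f x = 0

/-- Two C² functions `u, v` are orthogonal twin-harmonics on `Ω` if at every point of `Ω`:
`v·Δu = u·Δv`, `v·Δ_∞u = u·Δ_∞v`, `|∇u|² = |∇v|²`, and `∇u·∇v = 0`. -/
def TwinHarmonics {N : ℕ} (u v : (Fin N → ℝ) → ℝ) (Ω : Set (Fin N → ℝ)) : Prop :=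
  ContDiffOn ℝ 2 u Ω ∧ ContDiffOn ℝ 2 v Ω ∧ ∀ x ∈ Ω,
    v x * lap u x = u x * lap v x ∧
    v x * infLap u x = u x * infLap v x ∧
    (∑ i, pd u i x ^ 2) = (∑ i, pd v i x ^ 2) ∧
    (∑ i, pd u i x * pd v i x) = 0

/-!
`U = u² − v²` and `V = 2uv` are the real and imaginary parts of `(u + iv)²`, so
`∇U = 2u∇u − 2v∇v` and `∇V = 2v∇u + 2u∇v`. Because `∇u, ∇v` are orthogonal of equal length, so
are `∇U, ∇V`, with `|∇U|² = |∇V|² = 4(u² + v²)|∇u|²`. The product rule turns the Laplacian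
condition for `(U, V)` into that for `(u, v)`. For the ∞-Laplacian write `Δ_∞f = ½ ∇f·∇|∇f|²`:
since `|∇U|²` and `|∇V|²` are the same function `W`, the condition for `(U, V)` reads
`(V∇U − U∇V)·∇W = 0`. Expanding `∇W` leaves `v ∇u·∇|∇u|² = u ∇v·∇|∇u|²`, which is the
condition for `(u, v)` because `∇|∇u|² = ∇|∇v|²`.
-/

open Filter Topology

variable {N : ℕ}

def grad (f : (Fin N → ℝ) → ℝ) (x : Fin N → ℝ) : Fin N → ℝ := fun i => pd f i x

lemma sum_pd_sq_eq_dotProduct (f : (Fin N → ℝ) → ℝ) (x : Fin N → ℝ) :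
    ∑ i, pd f i x ^ 2 = grad f x ⬝ᵥ grad f x := by
  simp only [dotProduct, grad, sq]

section FirstOrder

variable {f g : (Fin N → ℝ) → ℝ} {x : Fin N → ℝ}

lemma pd_congr (h : f =ᶠ[𝓝 x] g) (i : Fin N) : pd f i x = pd g i x := by
  rw [pd, pd, h.fderiv_eq]

lemma grad_congr (h : f =ᶠ[𝓝 x] g) : grad f x = grad g x :=
  funext (pd_congr h)

lemma pd_add (hf : DifferentiableAt ℝ f x) (hg : DifferentiableAt ℝ g x) (i : Fin N) :
    pd (fun y => f y + g y) i x = pd f i x + pd g i x := by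
  simp [pd, fderiv_fun_add hf hg]

lemma pd_sub (hf : DifferentiableAt ℝ f x) (hg : DifferentiableAt ℝ g x) (i : Fin N) :
    pd (fun y => f y - g y) i x = pd f i x - pd g i x := by
  simp [pd, fderiv_fun_sub hf hg]

lemma pd_const_mul (hf : DifferentiableAt ℝ f x) (c : ℝ) (i : Fin N) :
    pd (fun y => c * f y) i x = c * pd f i x := by
  simp [pd, fderiv_const_mul hf]

lemma pd_mul (hf : DifferentiableAt ℝ f x) (hg : DifferentiableAt ℝ g x) (i : Fin N) :
    pd (fun y => f y * g y) i x = pd f i x * g x + f x * pd g i x := by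
  simp only [pd, fderiv_fun_mul hf hg, add_apply, smul_apply, smul_eq_mul]
  ring

lemma pd_sum {ι : Type*} (s : Finset ι) {F : ι → (Fin N → ℝ) → ℝ}
    (hF : ∀ k ∈ s, DifferentiableAt ℝ (F k) x) (i : Fin N) :
    pd (fun y => ∑ k ∈ s, F k y) i x = ∑ k ∈ s, pd (F k) i x := by
  simp [pd, fderiv_fun_sum hF]

end FirstOrder

section SecondOrder

variable {f g : (Fin N → ℝ) → ℝ} {x : Fin N → ℝ}

lemma ContDiffAt.eventually_differentiableAt (hf : ContDiffAt ℝ 2 f x) :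
    ∀ᶠ y in 𝓝 x, DifferentiableAt ℝ f y :=
  (hf.eventually (by simp)).mono fun _ hy => hy.differentiableAt (by norm_num)

lemma ContDiffAt.differentiableAt_pd (hf : ContDiffAt ℝ 2 f x) (i : Fin N) :
    DifferentiableAt ℝ (pd f i) x :=
  ((hf.fderiv_right (m := 1) (by norm_num)).differentiableAt (by norm_num)).clm_apply
    (differentiableAt_const _)

lemma ContDiffAt.differentiableAt_grad_dotProduct (hf : ContDiffAt ℝ 2 f x) :
    DifferentiableAt ℝ (fun y => grad f y ⬝ᵥ grad f y) x :=
  DifferentiableAt.fun_sum fun j _ => (hf.differentiableAt_pd j).mul (hf.differentiableAt_pd j)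

lemma lap_sub (hf : ContDiffAt ℝ 2 f x) (hg : ContDiffAt ℝ 2 g x) :
    lap (fun y => f y - g y) x = lap f x - lap g x := by
  have hpd (i : Fin N) : pd (fun y => f y - g y) i =ᶠ[𝓝 x] fun y => pd f i y - pd g i y :=
    (hf.eventually_differentiableAt.and hg.eventually_differentiableAt).mono
      fun y hy => pd_sub hy.1 hy.2 i
  simp only [lap, ← Finset.sum_sub_distrib]
  refine Finset.sum_congr rfl fun i _ => ?_
  rw [pd_congr (hpd i), pd_sub (hf.differentiableAt_pd i) (hg.differentiableAt_pd i)]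

lemma lap_const_mul (hf : ContDiffAt ℝ 2 f x) (c : ℝ) :
    lap (fun y => c * f y) x = c * lap f x := by
  have hpd (i : Fin N) : pd (fun y => c * f y) i =ᶠ[𝓝 x] fun y => c * pd f i y :=
    hf.eventually_differentiableAt.mono fun y hy => pd_const_mul hy c i
  simp only [lap, Finset.mul_sum]
  refine Finset.sum_congr rfl fun i _ => ?_
  rw [pd_congr (hpd i), pd_const_mul (hf.differentiableAt_pd i)]

lemma lap_mul (hf : ContDiffAt ℝ 2 f x) (hg : ContDiffAt ℝ 2 g x) :
    lap (fun y => f y * g y) x = g x * lap f x + 2 * (grad f x ⬝ᵥ grad g x) + f x * lap g x := by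
  have hpd (i : Fin N) :
      pd (fun y => f y * g y) i =ᶠ[𝓝 x] fun y => pd f i y * g y + f y * pd g i y :=
    (hf.eventually_differentiableAt.and hg.eventually_differentiableAt).mono
      fun y hy => pd_mul hy.1 hy.2 i
  have hf₁ := hf.differentiableAt (by norm_num)
  have hg₁ := hg.differentiableAt (by norm_num)
  simp only [lap, dotProduct, grad, Finset.mul_sum, ← Finset.sum_add_distrib]
  refine Finset.sum_congr rfl fun i _ => ?_
  rw [pd_congr (hpd i), pd_add ((hf.differentiableAt_pd i).fun_mul hg₁)
      (hf₁.fun_mul (hg.differentiableAt_pd i)), pd_mul (hf.differentiableAt_pd i) hg₁,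
    pd_mul hf₁ (hg.differentiableAt_pd i)]
  ring

lemma infLap_eq (hf : ContDiffAt ℝ 2 f x) :
    infLap f x = (grad f x ⬝ᵥ grad (fun y => grad f y ⬝ᵥ grad f y) x) / 2 := by
  have hgrad (i : Fin N) : grad (fun y => grad f y ⬝ᵥ grad f y) x i
      = 2 * ∑ j, pd f j x * pd (pd f j) i x := by
    simp only [grad, dotProduct]
    rw [pd_sum _ fun j _ => (hf.differentiableAt_pd j).fun_mul (hf.differentiableAt_pd j),
      Finset.mul_sum]
    refine Finset.sum_congr rfl fun j _ => ?_
    rw [pd_mul (hf.differentiableAt_pd j) (hf.differentiableAt_pd j)]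
    ring
  rw [infLap, dotProduct, Finset.sum_div]
  refine Finset.sum_congr rfl fun i _ => ?_
  rw [hgrad, Finset.mul_sum, Finset.mul_sum, Finset.sum_div]
  refine Finset.sum_congr rfl fun j _ => ?_
  simp only [grad]
  ring

end SecondOrder

section SquarePair

variable {u v : (Fin N → ℝ) → ℝ} {x : Fin N → ℝ}

lemma grad_sq_sub_sq (hu : DifferentiableAt ℝ u x) (hv : DifferentiableAt ℝ v x) :
    grad (fun y => u y ^ 2 - v y ^ 2) x = (2 * u x) • grad u x - (2 * v x) • grad v x := by
  ext i
  simp only [grad, sq, pd_sub (hu.fun_mul hu) (hv.fun_mul hv), pd_mul hu hu, pd_mul hv hv,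
    Pi.sub_apply, Pi.smul_apply, smul_eq_mul]
  ring

lemma grad_two_mul_mul (hu : DifferentiableAt ℝ u x) (hv : DifferentiableAt ℝ v x) :
    grad (fun y => 2 * u y * v y) x = (2 * v x) • grad u x + (2 * u x) • grad v x := by
  ext i
  simp only [grad, mul_assoc, pd_const_mul (hu.fun_mul hv), pd_mul hu hv,
    Pi.add_apply, Pi.smul_apply, smul_eq_mul]
  ring

lemma grad_sq_sub_sq_dotProduct_self (hu : DifferentiableAt ℝ u x) (hv : DifferentiableAt ℝ v x)
    (hnorm : grad u x ⬝ᵥ grad u x = grad v x ⬝ᵥ grad v x) (horth : grad u x ⬝ᵥ grad v x = 0) :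
    grad (fun y => u y ^ 2 - v y ^ 2) x ⬝ᵥ grad (fun y => u y ^ 2 - v y ^ 2) x
      = 4 * (u x ^ 2 + v x ^ 2) * (grad u x ⬝ᵥ grad u x) := by
  rw [grad_sq_sub_sq hu hv]
  simp only [sub_dotProduct, dotProduct_sub, smul_dotProduct, dotProduct_smul, smul_eq_mul,
    dotProduct_comm (grad v x) (grad u x)]
  linear_combination (-4 * v x ^ 2) * hnorm - 8 * u x * v x * horth

lemma grad_two_mul_mul_dotProduct_self (hu : DifferentiableAt ℝ u x) (hv : DifferentiableAt ℝ v x)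
    (hnorm : grad u x ⬝ᵥ grad u x = grad v x ⬝ᵥ grad v x) (horth : grad u x ⬝ᵥ grad v x = 0) :
    grad (fun y => 2 * u y * v y) x ⬝ᵥ grad (fun y => 2 * u y * v y) x
      = 4 * (u x ^ 2 + v x ^ 2) * (grad u x ⬝ᵥ grad u x) := by
  rw [grad_two_mul_mul hu hv]
  simp only [add_dotProduct, dotProduct_add, smul_dotProduct, dotProduct_smul, smul_eq_mul,
    dotProduct_comm (grad v x) (grad u x)]
  linear_combination (-4 * u x ^ 2) * hnorm + 8 * u x * v x * horth

lemma grad_sq_sub_sq_dotProduct_grad_two_mul_mul (hu : DifferentiableAt ℝ u x)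
    (hv : DifferentiableAt ℝ v x)
    (hnorm : grad u x ⬝ᵥ grad u x = grad v x ⬝ᵥ grad v x) (horth : grad u x ⬝ᵥ grad v x = 0) :
    grad (fun y => u y ^ 2 - v y ^ 2) x ⬝ᵥ grad (fun y => 2 * u y * v y) x = 0 := by
  rw [grad_sq_sub_sq hu hv, grad_two_mul_mul hu hv]
  simp only [sub_dotProduct, dotProduct_add, smul_dotProduct, dotProduct_smul, smul_eq_mul,
    dotProduct_comm (grad v x) (grad u x)]
  linear_combination 4 * u x * v x * hnorm + 4 * (u x ^ 2 - v x ^ 2) * horth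

lemma lap_square_twin (hu : ContDiffAt ℝ 2 u x) (hv : ContDiffAt ℝ 2 v x)
    (hnorm : grad u x ⬝ᵥ grad u x = grad v x ⬝ᵥ grad v x) (horth : grad u x ⬝ᵥ grad v x = 0)
    (hlap : v x * lap u x = u x * lap v x) :
    2 * u x * v x * lap (fun y => u y ^ 2 - v y ^ 2) x
      = (u x ^ 2 - v x ^ 2) * lap (fun y => 2 * u y * v y) x := by
  simp only [sq, mul_assoc]
  rw [lap_sub (hu.mul hu) (hv.mul hv), lap_const_mul (hu.mul hv), lap_mul hu hu, lap_mul hv hv,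
    lap_mul hu hv]
  linear_combination 2 * (u x ^ 2 + v x ^ 2) * hlap + 4 * u x * v x * hnorm
    - 4 * (u x ^ 2 - v x ^ 2) * horth

lemma grad_mul_grad_dotProduct_self (hu : ContDiffAt ℝ 2 u x) (hv : ContDiffAt ℝ 2 v x) :
    grad (fun y => 4 * (u y ^ 2 + v y ^ 2) * (grad u y ⬝ᵥ grad u y)) x
      = (8 * (grad u x ⬝ᵥ grad u x)) • (u x • grad u x + v x • grad v x)
        + (4 * (u x ^ 2 + v x ^ 2)) • grad (fun y => grad u y ⬝ᵥ grad u y) x := by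
  have hu₁ := hu.differentiableAt (by norm_num)
  have hv₁ := hv.differentiableAt (by norm_num)
  ext i
  simp only [grad, sq]
  rw [pd_mul (((hu₁.fun_mul hu₁).fun_add (hv₁.fun_mul hv₁)).const_mul 4)
      hu.differentiableAt_grad_dotProduct,
    pd_const_mul ((hu₁.fun_mul hu₁).fun_add (hv₁.fun_mul hv₁)),
    pd_add (hu₁.fun_mul hu₁) (hv₁.fun_mul hv₁), pd_mul hu₁ hu₁, pd_mul hv₁ hv₁]
  simp only [grad, Pi.add_apply, Pi.smul_apply, smul_eq_mul]
  ring

lemma infLap_square_twin (hu : ContDiffAt ℝ 2 u x) (hv : ContDiffAt ℝ 2 v x)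
    (hnorm : ∀ᶠ y in 𝓝 x, grad u y ⬝ᵥ grad u y = grad v y ⬝ᵥ grad v y)
    (horth : ∀ᶠ y in 𝓝 x, grad u y ⬝ᵥ grad v y = 0)
    (hinf : v x * infLap u x = u x * infLap v x) :
    2 * u x * v x * infLap (fun y => u y ^ 2 - v y ^ 2) x
      = (u x ^ 2 - v x ^ 2) * infLap (fun y => 2 * u y * v y) x := by
  have hdiff := hu.eventually_differentiableAt.and hv.eventually_differentiableAt
  have hU : grad (fun y => grad (fun z => u z ^ 2 - v z ^ 2) y
      ⬝ᵥ grad (fun z => u z ^ 2 - v z ^ 2) y) x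
      = grad (fun y => 4 * (u y ^ 2 + v y ^ 2) * (grad u y ⬝ᵥ grad u y)) x :=
    grad_congr <| (hdiff.and (hnorm.and horth)).mono fun y ⟨⟨huy, hvy⟩, hny, hoy⟩ =>
      grad_sq_sub_sq_dotProduct_self huy hvy hny hoy
  have hV : grad (fun y => grad (fun z => 2 * u z * v z) y ⬝ᵥ grad (fun z => 2 * u z * v z) y) x
      = grad (fun y => 4 * (u y ^ 2 + v y ^ 2) * (grad u y ⬝ᵥ grad u y)) x :=
    grad_congr <| (hdiff.and (hnorm.and horth)).mono fun y ⟨⟨huy, hvy⟩, hny, hoy⟩ =>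
      grad_two_mul_mul_dotProduct_self huy hvy hny hoy
  have hgrad_norm :
      grad (fun y => grad v y ⬝ᵥ grad v y) x = grad (fun y => grad u y ⬝ᵥ grad u y) x :=
    grad_congr (hnorm.mono fun _ h => h.symm)
  have hu₁ := hu.differentiableAt (by norm_num)
  have hv₁ := hv.differentiableAt (by norm_num)
  rw [infLap_eq hu, infLap_eq hv, hgrad_norm] at hinf
  rw [infLap_eq ((hu.pow 2).sub (hv.pow 2)), infLap_eq ((contDiffAt_const.mul hu).mul hv), hU, hV,
    grad_mul_grad_dotProduct_self hu hv, grad_sq_sub_sq hu₁ hv₁, grad_two_mul_mul hu₁ hv₁]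
  simp only [add_dotProduct, sub_dotProduct, dotProduct_add, smul_dotProduct, dotProduct_smul,
    smul_eq_mul, dotProduct_comm (grad v x) (grad u x)]
  set n := grad u x ⬝ᵥ grad u x
  linear_combination (u x ^ 2 + v x ^ 2) * (8 * n * u x * v x * hnorm.self_of_nhds
    + 8 * n * (v x ^ 2 - u x ^ 2) * horth.self_of_nhds + 8 * (u x ^ 2 + v x ^ 2) * hinf)

end SquarePair

/-- If `(u, v)` are orthogonal twin-harmonics on an open `Ω ⊆ ℝ^N`, then so are
`(u² − v², 2uv)`. -/
theorem twinHarmonics_square {N : ℕ}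
    (Ω : Set (Fin N → ℝ)) (hΩ : IsOpen Ω)
    (u v : (Fin N → ℝ) → ℝ)
    (huv : TwinHarmonics u v Ω) :
    TwinHarmonics (fun x => u x ^ 2 - v x ^ 2) (fun x => 2 * u x * v x) Ω := by
  obtain ⟨hu, hv, h⟩ := huv
  refine ⟨(hu.pow 2).sub (hv.pow 2), (contDiffOn_const.mul hu).mul hv, fun x hx => ?_⟩
  have hΩx : Ω ∈ 𝓝 x := hΩ.mem_nhds hx
  have hux := hu.contDiffAt hΩx
  have hvx := hv.contDiffAt hΩx
  have hu₁ := hux.differentiableAt (by norm_num)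
  have hv₁ := hvx.differentiableAt (by norm_num)
  have hnorm : ∀ᶠ y in 𝓝 x, grad u y ⬝ᵥ grad u y = grad v y ⬝ᵥ grad v y :=
    eventually_of_mem hΩx fun y hy => by
      simpa only [sum_pd_sq_eq_dotProduct] using (h y hy).2.2.1
  have horth : ∀ᶠ y in 𝓝 x, grad u y ⬝ᵥ grad v y = 0 :=
    eventually_of_mem hΩx fun y hy => (h y hy).2.2.2
  obtain ⟨hlap, hinf, -, -⟩ := h x hx
  refine ⟨lap_square_twin hux hvx hnorm.self_of_nhds horth.self_of_nhds hlap,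
    infLap_square_twin hux hvx hnorm horth hinf, ?_,
    grad_sq_sub_sq_dotProduct_grad_two_mul_mul hu₁ hv₁ hnorm.self_of_nhds horth.self_of_nhds⟩
  rw [sum_pd_sq_eq_dotProduct, sum_pd_sq_eq_dotProduct,
    grad_sq_sub_sq_dotProduct_self hu₁ hv₁ hnorm.self_of_nhds horth.self_of_nhds,
    grad_two_mul_mul_dotProduct_self hu₁ hv₁ hnorm.self_of_nhds horth.self_of_nhds]
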